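/- arXiv:1905.07017 — 4 statements merged into one kernel-verified Lean document; each statement's English description precedes it below -/
import Mathlib

section
/- Let G ≤ GL(n,F) be finite, F = F_q(X_1,...,X_m), and φ_α an admissible congruence homomorphism. Then the kernel of φ_α on the enveloping algebra ⟨G⟩_{F_{q^μ}} is contained in the Jacobson radical of ⟨G⟩_{F_{q^μ}}. -/
open scoped MatrixGroups

/-- An idempotent matrix over a domain whose entrywise image under a homomorphism
to a field vanishes must be zero. -/
private lemma idem_matrix_eq_zero' {R E : Type*} [CommRing R] [IsDomain R] [Field E]
    (φ : R →+* E) {n : ℕ} (e : Matrix (Fin n) (Fin n) R)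
    (he : e * e = e) (h0 : e.map φ = 0) : e = 0 := by
  set f : Matrix (Fin n) (Fin n) R := 1 - e with hf
  have hff : f * f = f := by
    rw [hf, sub_mul, one_mul, mul_sub, mul_one, he]
    simp
  have hd : f.det * f.det = f.det := by rw [← Matrix.det_mul, hff]
  have hd01 : f.det = 0 ∨ f.det = 1 := by
    rcases mul_eq_zero.mp (show f.det * (f.det - 1) = 0 by rw [mul_sub, hd]; ring) with h | h
    · exact Or.inl h
    · exact Or.inr (by linear_combination h)
  have hmapf : f.map φ = 1 := by
    have : f.map φ = φ.mapMatrix f := rfl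
    rw [this, hf, map_sub, map_one]
    have : (φ.mapMatrix e : Matrix (Fin n) (Fin n) E) = e.map φ := rfl
    rw [this, h0, sub_zero]
  have hdet1 : φ f.det = 1 := by
    rw [RingHom.map_det]
    show (f.map ⇑φ).det = 1
    rw [hmapf, Matrix.det_one]
  have hdet : f.det = 1 := by
    rcases hd01 with h | h
    · rw [h, map_zero] at hdet1; exact absurd hdet1 zero_ne_one
    · exact h
  have hu : IsUnit f := (Matrix.isUnit_iff_isUnit_det f).mpr (hdet ▸ isUnit_one)
  have hf1 : f = 1 := hu.mul_left_cancel (by rw [hff, mul_one])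
  have : e = 1 - f := by rw [hf, sub_sub_cancel]
  rw [this, hf1, sub_self]

/-- In a finite monoid, some positive power of every element is idempotent. -/
private lemma exists_idem_pow' {M : Type*} [Monoid M] [Finite M] (x : M) :
    ∃ N, 0 < N ∧ x ^ N * x ^ N = x ^ N := by
  obtain ⟨a, b, hne, hab⟩ := Finite.exists_ne_map_eq_of_infinite (fun k : ℕ => x ^ (k + 1))
  wlog hlt : a < b generalizing a b
  · exact this b a hne.symm hab.symm (by omega)
  have hab' : x ^ (a + 1) = x ^ (b + 1) := hab
  -- x ^ (a+1) = x ^ ((a+1) + d) with d = b - a > 0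
  obtain ⟨d', hd'⟩ : ∃ d', b - a = d' + 1 := ⟨b - a - 1, by omega⟩
  set A := a + 1 with hA
  have h : x ^ A = x ^ (A + (d' + 1)) := by
    rw [hab']; congr 1; omega
  have key : ∀ j, x ^ (A + j * (d' + 1)) = x ^ A := by
    intro j
    induction j with
    | zero => simp
    | succ j ih =>
      have e : A + (j + 1) * (d' + 1) = (A + j * (d' + 1)) + (d' + 1) := by ring
      rw [e, pow_add, ih, ← pow_add, ← h]
  refine ⟨A * (d' + 1), by positivity, ?_⟩
  have h2 : A * (d' + 1) + A * (d' + 1) = A * d' + (A + A * (d' + 1)) := by ring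
  calc x ^ (A * (d' + 1)) * x ^ (A * (d' + 1)) = x ^ (A * (d' + 1) + A * (d' + 1)) := by
        rw [pow_add]
    _ = x ^ (A * d') * x ^ (A + A * (d' + 1)) := by rw [h2, pow_add]
    _ = x ^ (A * d') * x ^ A := by rw [key A]
    _ = x ^ (A * d' + A) := (pow_add x (A * d') A).symm
    _ = x ^ (A * (d' + 1)) := by rw [show A * d' + A = A * (d' + 1) by ring]

/-- Let `Fqμ` be a finite field of characteristic `p`, `R` a commutative
domain of characteristic `p` which is an `Fqμ`-algebra (in the paper,
`R = (1/f) Fqμ[X_1,…,X_m]`, so that matrices over it act on the function field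
`Fqμ(X_1,…,X_m)`), and `φ : R → E` a ring homomorphism to a field `E` (the admissible
evaluation homomorphism `φ_α`).  Let `G ≤ GL(n,R)` be a finite group and let
`A = ⟨G⟩_{Fqμ}` be its enveloping `Fqμ`-algebra.  Then the kernel of the entrywise map
`φ` on `A` is contained in the Jacobson radical of `A`. -/
theorem congruence_kernel_le_jacobson_of_envelopingAlgebra
    {p : ℕ} [Fact p.Prime] {Fqμ R E : Type*}
    [Field Fqμ] [Finite Fqμ] [CharP Fqμ p]
    [CommRing R] [IsDomain R] [CharP R p] [Algebra Fqμ R]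
    [Field E] (φ : R →+* E) {n : ℕ}
    (G : Subgroup (GL (Fin n) R)) [Finite G]
    (A : Subalgebra Fqμ (Matrix (Fin n) (Fin n) R))
    (hA : A = Algebra.adjoin Fqμ
      ((fun g : GL (Fin n) R => (g : Matrix (Fin n) (Fin n) R)) '' (G : Set (GL (Fin n) R)))) :
    ∀ x : A, ((x : Matrix (Fin n) (Fin n) R).map φ = 0) →
      x ∈ (⊥ : Ideal A).jacobson := by
  classical
  set s : Set (Matrix (Fin n) (Fin n) R) :=
    (fun g : GL (Fin n) R => (g : Matrix (Fin n) (Fin n) R)) '' (G : Set (GL (Fin n) R)) with hs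
  have hsfin : s.Finite := Set.Finite.image _ (Set.toFinite _)
  -- the closure of s is s itself inside the submonoid coming from G
  have hsub : (Submonoid.closure s : Set (Matrix (Fin n) (Fin n) R)) ⊆ s := by
    have hle : Submonoid.closure s ≤
        Submonoid.map (Units.coeHom (Matrix (Fin n) (Fin n) R)) G.toSubmonoid := by
      rw [Submonoid.closure_le]
      rintro m ⟨g, hg, rfl⟩
      exact ⟨g, hg, rfl⟩
    intro m hm
    obtain ⟨g, hg, rfl⟩ := hle hm
    exact ⟨g, hg, rfl⟩
  have hfinclo : (Submonoid.closure s : Set (Matrix (Fin n) (Fin n) R)).Finite :=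
    hsfin.subset hsub
  have hspan : Subalgebra.toSubmodule A =
      Submodule.span Fqμ (Submonoid.closure s : Set (Matrix (Fin n) (Fin n) R)) := by
    rw [hA]; exact Algebra.adjoin_eq_span Fqμ s
  have hfg : (Subalgebra.toSubmodule A).FG := by
    rw [hspan]; exact Submodule.fg_span hfinclo
  haveI : Module.Finite Fqμ (Subalgebra.toSubmodule A) := Module.Finite.iff_fg.mpr hfg
  haveI : Finite (Subalgebra.toSubmodule A) := Module.finite_of_finite Fqμ
  haveI hAfin : Finite A := ‹Finite (Subalgebra.toSubmodule A)›
  -- every kernel element is nilpotent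
  have hnil : ∀ y : A, ((y : Matrix (Fin n) (Fin n) R).map φ = 0) → IsNilpotent y := by
    intro y hy
    obtain ⟨N, hN, hidem⟩ := exists_idem_pow' y
    refine ⟨N, ?_⟩
    have hmat : ((y ^ N : A) : Matrix (Fin n) (Fin n) R) *
        ((y ^ N : A) : Matrix (Fin n) (Fin n) R) = ((y ^ N : A) : Matrix (Fin n) (Fin n) R) := by
      exact_mod_cast congrArg (fun z : A => (z : Matrix (Fin n) (Fin n) R)) hidem
    have hpow : ((y ^ N : A) : Matrix (Fin n) (Fin n) R) =
        ((y : Matrix (Fin n) (Fin n) R)) ^ N := by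
      exact_mod_cast rfl
    have hmap0 : ((y ^ N : A) : Matrix (Fin n) (Fin n) R).map φ = 0 := by
      rw [hpow]
      have : ((y : Matrix (Fin n) (Fin n) R) ^ N).map φ =
          ((y : Matrix (Fin n) (Fin n) R).map φ) ^ N := by
        show φ.mapMatrix _ = _
        rw [map_pow]
        rfl
      rw [this, hy, zero_pow hN.ne']
    have := idem_matrix_eq_zero' φ _ hmat hmap0
    exact_mod_cast this
  intro x hx
  rw [Ideal.mem_jacobson_iff]
  intro y
  have h1 : ((y * x : A) : Matrix (Fin n) (Fin n) R).map φ = 0 := by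
    have hc : ((y * x : A) : Matrix (Fin n) (Fin n) R) =
        (y : Matrix (Fin n) (Fin n) R) * (x : Matrix (Fin n) (Fin n) R) := rfl
    have : ((y * x : A) : Matrix (Fin n) (Fin n) R).map φ =
        ((y : Matrix (Fin n) (Fin n) R).map φ) * ((x : Matrix (Fin n) (Fin n) R).map φ) := by
      rw [hc]; show φ.mapMatrix _ = _; rw [map_mul]; rfl
    rw [this, hx, mul_zero]
  have hu : IsUnit ((1 : A) + y * x) := (hnil _ h1).isUnit_one_add
  obtain ⟨u, hu'⟩ := hu
  refine ⟨(↑u⁻¹ : A), ?_⟩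
  rw [Ideal.mem_bot]
  have hinv : (↑u⁻¹ : A) * ((1 : A) + y * x) = 1 := by rw [← hu']; exact u.inv_mul
  have h2 : (↑u⁻¹ : A) * y * x + ↑u⁻¹ - 1 = (↑u⁻¹ : A) * ((1 : A) + y * x) - 1 := by
    noncomm_ring
  rw [h2, hinv, sub_self]
end

section
/- A finitely generated group of unipotent matrices over a field of characteristic p > 0, all of whose elements are unipotent, is finite. -/
/-!
Embed the group in `GL` over the algebraic closure `k` of `F` and argue by induction on the
dimension of a representation `ρ` of a finitely generated group `G` on which every `ρ g` is
unipotent, showing that `ker ρ` has finite index. If `ρ` is irreducible, Burnside's theorem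
(Schur's lemma plus Jacobson density) says that the `ρ g` span `End V`; as unipotent maps have
trace `dim V`, `trace ((ρ g - 1) * ρ h) = 0` for all `h`, so `ρ g = 1` by nondegeneracy of the
trace form. Otherwise a proper invariant subspace `W` splits `ρ` into smaller representations on
`W` and `V ⧸ W`. The elements acting trivially on both form a finite-index, hence finitely
generated, subgroup, and for two such `x`, `y` we have `(ρ x - 1) * (ρ y - 1) = 0`, so its image
is a finitely generated abelian group of exponent `p`, hence finite.
-/

open Module
open scoped MonoidAlgebra

theorem pow_eq_one_of_sub_one_sq_eq_zero {R : Type*} [Ring R] {a : R} {n : ℕ}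
    (ha : (a - 1) ^ 2 = 0) (hn : (n : R) = 0) : a ^ n = 1 := by
  have hpow : ∀ m : ℕ, a ^ m = 1 + m * (a - 1) := by
    intro m
    induction m with
    | zero => simp
    | succ m ih =>
      calc a ^ (m + 1) = (1 + m * (a - 1)) * (1 + (a - 1)) := by rw [pow_succ, ih]; congr; abel
        _ = 1 + (m + 1) * (a - 1) + m * (a - 1) ^ 2 := by noncomm_ring
        _ = 1 + ↑(m + 1) * (a - 1) := by rw [ha]; push_cast; simp
  rw [hpow, hn, zero_mul, add_zero]

theorem commute_of_sub_one_mul_sub_one_eq_zero {R : Type*} [Ring R] {a b : R}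
    (hab : (a - 1) * (b - 1) = 0) (hba : (b - 1) * (a - 1) = 0) : Commute a b := by
  have h : Commute (a - 1) (b - 1) := hab.trans hba.symm
  simpa using (h.add_left (Commute.one_left _)).add_right (Commute.one_right _)

theorem Subgroup.finiteIndex_of_finiteIndex_subgroupOf {G : Type*} [Group G] {H K : Subgroup G}
    [K.FiniteIndex] [(H.subgroupOf K).FiniteIndex] : H.FiniteIndex := by
  have : (H ⊓ K).FiniteIndex := by
    rw [finiteIndex_iff, ← relIndex_mul_index (inf_le_right : H ⊓ K ≤ K), inf_relIndex_right]
    exact mul_ne_zero (FiniteIndex.index_ne_zero (H := H.subgroupOf K)) FiniteIndex.index_ne_zero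
  exact finiteIndex_of_le (H := H ⊓ K) inf_le_left

theorem MonoidHom.finiteIndex_ker_of_commute_of_isOfFinOrder {G H : Type*} [Group G]
    [Group.FG G] [Group H] (f : G →* H) (N : Subgroup G) [N.FiniteIndex]
    (hcomm : ∀ x ∈ N, ∀ y ∈ N, Commute (f x) (f y)) (htors : ∀ x ∈ N, IsOfFinOrder (f x)) :
    f.ker.FiniteIndex := by
  let ψ := f.domRestrict N
  have : Group.FG ψ.range := Group.fg_of_surjective ψ.rangeRestrict_surjective
  let : CommGroup ψ.range :=
    { mul_comm := by
        rintro ⟨_, x, rfl⟩ ⟨_, y, rfl⟩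
        exact Subtype.ext (hcomm x x.2 y y.2) }
  have : Finite ψ.range := CommGroup.finite_of_fg_isMulTorsion _ <| by
    rintro ⟨_, x, rfl⟩
    exact Submonoid.isOfFinOrder_coe.1 (htors x x.2)
  have : (f.ker.subgroupOf N).FiniteIndex := f.ker_domRestrict N ▸ Subgroup.finiteIndex_ker ψ
  exact Subgroup.finiteIndex_of_finiteIndex_subgroupOf (K := N)

section TraceForm

variable {k V : Type*} [Field k] [AddCommGroup V] [Module k V] [FiniteDimensional k V]

theorem LinearMap.eq_zero_of_forall_trace_mul_eq_zero {f : Module.End k V}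
    (h : ∀ g, LinearMap.trace k V (g * f) = 0) : f = 0 := by
  ext v
  rw [LinearMap.zero_apply, ← Module.forall_dual_apply_eq_zero_iff k]
  intro φ
  have hcomp : φ.smulRight v * f = (φ ∘ₗ f).smulRight v := rfl
  simpa [hcomp, LinearMap.trace_smulRight] using h (φ.smulRight v)

theorem LinearMap.trace_eq_finrank_of_isNilpotent_sub_one {f : Module.End k V}
    (hf : IsNilpotent (f - 1)) : LinearMap.trace k V f = finrank k V := by
  rw [← sub_add_cancel f 1, map_add, (LinearMap.isNilpotent_trace_of_isNilpotent hf).eq_zero,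
    LinearMap.trace_one, zero_add]

end TraceForm

namespace Representation

section

variable {k G V : Type*} [Field k] [AddCommGroup V] [Module k V]

section Monoid

variable [Monoid G] {ρ : Representation k G V}

theorem IsIrreducible.asAlgebraHom_surjective [IsAlgClosed k] [FiniteDimensional k V]
    [ρ.IsIrreducible] : Function.Surjective ρ.asAlgebraHom := by
  let M := ρ.asModule
  have hSchur : Function.Surjective (algebraMap k (Module.End k[G] M)) :=
    (IsSimpleModule.algebraMap_end_bijective_of_isAlgClosed k).2
  have : Module.Finite (Module.End k[G] M) M :=
    .of_restrictScalars_finite k (Module.End k[G] M) M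
  intro f
  let F : Module.End (Module.End k[G] M) M :=
    { toFun := fun m => ρ.asModuleEquiv.symm (f (ρ.asModuleEquiv m))
      map_add' := by simp
      map_smul' := fun φ m => by
        obtain ⟨c, rfl⟩ := hSchur φ
        simp }
  obtain ⟨r, hr⟩ := Module.Finite.toModuleEnd_moduleEnd_surjective (R := k[G]) (M := M) F
  refine ⟨r, LinearMap.ext fun v => ?_⟩
  have := congr(ρ.asModuleEquiv ($hr (ρ.asModuleEquiv.symm v)))
  rwa [Module.toModuleEnd_apply, DistribSMul.toLinearMap_apply, asModuleEquiv_map_smul,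
    LinearEquiv.apply_symm_apply] at this

theorem IsIrreducible.apply_eq_one_of_isNilpotent_sub_one [IsAlgClosed k] [FiniteDimensional k V]
    [ρ.IsIrreducible] (hρ : ∀ g, IsNilpotent (ρ g - 1)) (g : G) : ρ g = 1 := by
  rw [← sub_eq_zero]
  refine LinearMap.eq_zero_of_forall_trace_mul_eq_zero fun f => ?_
  obtain ⟨x, rfl⟩ := IsIrreducible.asAlgebraHom_surjective (ρ := ρ) f
  induction x using MonoidAlgebra.induction_on with
  | of h =>
    rw [asAlgebraHom_of, mul_sub, mul_one, ← map_mul, map_sub,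
      LinearMap.trace_eq_finrank_of_isNilpotent_sub_one (hρ _),
      LinearMap.trace_eq_finrank_of_isNilpotent_sub_one (hρ _), sub_self]
  | add x y hx hy => rw [map_add, add_mul, map_add, hx, hy, add_zero]
  | smul c x hx => rw [map_smul, smul_mul_assoc, map_smul, hx, smul_zero]

end Monoid

section Group

variable [Group G] (ρ : Representation k G V) (W : Submodule k V) (hW : ∀ g, W ≤ W.comap (ρ g))

theorem mem_ker_subrepresentation_iff {g : G} :
    g ∈ (ρ.subrepresentation W hW).ker ↔ ∀ w ∈ W, ρ g w = w := by
  simp [MonoidHom.mem_ker, LinearMap.ext_iff, Subtype.ext_iff]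

theorem mem_ker_quotient_iff {g : G} :
    g ∈ (ρ.quotient W hW).ker ↔ ∀ v, ρ g v - v ∈ W := by
  simp only [MonoidHom.mem_ker, LinearMap.ext_iff, W.mkQ_surjective.forall, quotient_apply]
  simp [Submodule.Quotient.eq]

theorem isNilpotent_subrepresentation_sub_one {g : G} (hg : IsNilpotent (ρ g - 1)) :
    IsNilpotent (ρ.subrepresentation W hW g - 1) := by
  have hmaps : Set.MapsTo (ρ g - 1 : Module.End k V) W W := fun v hv => W.sub_mem (hW g hv) hv
  have : ρ.subrepresentation W hW g - 1 = (ρ g - 1).restrict hmaps := by ext; rfl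
  exact this ▸ Module.End.isNilpotent.restrict hmaps hg

theorem isNilpotent_quotient_sub_one {g : G} (hg : IsNilpotent (ρ g - 1)) :
    IsNilpotent (ρ.quotient W hW g - 1) := by
  have hle : W ≤ W.comap (ρ g - 1 : Module.End k V) := fun v hv => W.sub_mem (hW g hv) hv
  have : ρ.quotient W hW g - 1 = W.mapQ W (ρ g - 1) hle := by ext; simp
  exact this ▸ Module.End.IsNilpotent.mapQ hle hg

theorem finiteIndex_ker_of_subrepresentation_of_quotient {p : ℕ} [CharP k p] [NeZero p]
    [Group.FG G] [(ρ.subrepresentation W hW).ker.FiniteIndex]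
    [(ρ.quotient W hW).ker.FiniteIndex] : ρ.ker.FiniteIndex := by
  have hsq : ∀ x ∈ (ρ.subrepresentation W hW).ker, ∀ y ∈ (ρ.quotient W hW).ker,
      (ρ x - 1) * (ρ y - 1) = 0 := by
    intro x hx y hy
    ext v
    rw [mem_ker_subrepresentation_iff] at hx
    rw [mem_ker_quotient_iff] at hy
    simpa [sub_eq_zero] using hx _ (hy v)
  have hp : (p : Module.End k V) = 0 := by
    rw [← map_natCast (algebraMap k (Module.End k V)), CharP.cast_eq_zero, map_zero]
  rw [← ρ.ker_toHomUnits]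
  refine ρ.toHomUnits.finiteIndex_ker_of_commute_of_isOfFinOrder
    ((ρ.subrepresentation W hW).ker ⊓ (ρ.quotient W hW).ker) ?_ ?_
  · rintro x ⟨hxW, hxQ⟩ y ⟨hyW, hyQ⟩
    exact .units_of_val <|
      commute_of_sub_one_mul_sub_one_eq_zero (hsq x hxW y hyQ) (hsq y hyW x hxQ)
  · rintro x ⟨hxW, hxQ⟩
    refine isOfFinOrder_iff_pow_eq_one.2 ⟨p, NeZero.pos p, Units.ext ?_⟩
    exact pow_eq_one_of_sub_one_sq_eq_zero (by rw [sq]; exact hsq x hxW x hxQ) hp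

end Group

end

theorem finiteIndex_ker_of_isNilpotent_sub_one {k G V : Type*} [Field k] [IsAlgClosed k] {p : ℕ}
    [CharP k p] [NeZero p] [AddCommGroup V] [Module k V] [FiniteDimensional k V] [Group G]
    [Group.FG G] (ρ : Representation k G V) (hρ : ∀ g, IsNilpotent (ρ g - 1)) :
    ρ.ker.FiniteIndex := by
  by_cases hσ : ∃ σ : Subrepresentation ρ, σ ≠ ⊥ ∧ σ ≠ ⊤
  · obtain ⟨σ, hbot, htop⟩ := hσ
    have hW : ∀ g, σ.toSubmodule ≤ σ.toSubmodule.comap (ρ g) := fun g _ hv =>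
      σ.apply_mem_toSubmodule g hv
    have hbot' : σ.toSubmodule ≠ ⊥ := fun h => hbot (Subrepresentation.toSubmodule_injective h)
    have htop' : σ.toSubmodule ≠ ⊤ := fun h => htop (Subrepresentation.toSubmodule_injective h)
    have hsub_lt : finrank k σ.toSubmodule < finrank k V := Submodule.finrank_lt htop'
    have hquot_lt : finrank k (V ⧸ σ.toSubmodule) < finrank k V := by
      have := Submodule.one_le_finrank_iff.2 hbot'
      have := σ.toSubmodule.finrank_quotient_add_finrank
      omega
    have := finiteIndex_ker_of_isNilpotent_sub_one (p := p) (ρ.subrepresentation _ hW)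
      fun g => isNilpotent_subrepresentation_sub_one ρ _ hW (hρ g)
    have := finiteIndex_ker_of_isNilpotent_sub_one (p := p) (ρ.quotient _ hW)
      fun g => isNilpotent_quotient_sub_one ρ _ hW (hρ g)
    exact ρ.finiteIndex_ker_of_subrepresentation_of_quotient _ hW (p := p)
  · have htriv : ∀ g, ρ g = 1 := by
      rcases subsingleton_or_nontrivial V with hV | hV
      · exact fun g => Subsingleton.elim _ _
      · have : ρ.IsIrreducible :=
          { exists_pair_ne := ⟨⊥, ⊤, fun h => bot_ne_top congr(($h).toSubmodule)⟩
            eq_bot_or_eq_top := fun σ => by contrapose! hσ; exact ⟨σ, hσ⟩ }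
        exact IsIrreducible.apply_eq_one_of_isNilpotent_sub_one hρ
    rw [show ρ.ker = ⊤ from eq_top_iff.2 fun g _ => htriv g]
    infer_instance
termination_by finrank k V

theorem finite_of_injective_of_isNilpotent_sub_one {k G V : Type*} [Field k] [IsAlgClosed k]
    {p : ℕ} [CharP k p] [NeZero p] [AddCommGroup V] [Module k V] [FiniteDimensional k V]
    [Group G] [Group.FG G] (ρ : Representation k G V) (hinj : Function.Injective ρ)
    (hρ : ∀ g, IsNilpotent (ρ g - 1)) : Finite G := by
  have := finiteIndex_ker_of_isNilpotent_sub_one (p := p) ρ hρ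
  rw [(MonoidHom.ker_eq_bot_iff ρ).2 hinj] at this
  exact (Subgroup.finite_iff_finite_and_finiteIndex ⊥).2 ⟨inferInstance, this⟩

end Representation

open scoped MatrixGroups

/-- A finitely generated group of matrices over a field of
characteristic `p > 0`, all of whose elements are unipotent, is finite. -/
theorem finitelyGenerated_unipotent_group_is_finite
    {p : ℕ} [Fact p.Prime] {F : Type*} [Field F] [CharP F p] {n : ℕ}
    (G : Subgroup (GL (Fin n) F)) [Group.FG G]
    (hu : ∀ g ∈ G, ((g : Matrix (Fin n) (Fin n) F) - 1) ^ n = 0) :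
    Finite G := by
  let K := AlgebraicClosure F
  let ψ : Matrix (Fin n) (Fin n) F →+* Module.End K (Fin n → K) :=
    Matrix.toLinAlgEquiv'.toRingHom.comp (algebraMap F K).mapMatrix
  have hψ : Function.Injective ψ :=
    Matrix.toLinAlgEquiv'.injective.comp (Matrix.map_injective (algebraMap F K).injective)
  let ρ : Representation K G (Fin n → K) :=
    ψ.toMonoidHom.comp ((Units.coeHom _).comp G.subtype)
  refine ρ.finite_of_injective_of_isNilpotent_sub_one (p := p)
    (hψ.comp (Units.val_injective.comp Subtype.val_injective)) fun g => ?_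
  have hg : ρ g - 1 = ψ ((g : GL (Fin n) F) - 1) := by simp [ρ]
  exact hg ▸ IsNilpotent.map ⟨n, hu g g.2⟩ ψ
end

section
/- Let G ≤ GL(n,F) be a group, U a nonzero proper G-invariant subspace of V = F^n, and ρ_U: G → GL(U) × GL(V/U) the map sending g to its induced actions on U and V/U. Then G is finite if and only if ρ_U(G) is finite, provided F has characteristic p > 0 and G is finitely generated. -/
open scoped MatrixGroups

/-!
Let `K` be the kernel of `ρ_U`. An element of `K` has the form `1 + N` with `N V ⊆ U` and
`N U = 0`, so any two such `N` multiply to zero. Hence `K` is abelian, and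
`(1 + N) ^ p = 1 + p N = 1` in characteristic `p`. If `ρ_U(G)` is finite, `K` has finite
index in the finitely generated group `G`, so it is finitely generated (Schreier), and a
finitely generated abelian torsion group is finite.
-/

theorem pow_eq_one_add_mul_sub_one_of_sq_sub_one_eq_zero {A : Type*} [Ring A] {x : A}
    (hx : (x - 1) ^ 2 = 0) (k : ℕ) : x ^ k = 1 + k * (x - 1) := by
  induction k with
  | zero => simp
  | succ k ih =>
    calc x ^ (k + 1) = (1 + k * (x - 1)) * (1 + (x - 1)) := by rw [pow_succ, ih, add_sub_cancel]
      _ = 1 + (k + 1) * (x - 1) + k * (x - 1) ^ 2 := by noncomm_ring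
      _ = 1 + ((k + 1 : ℕ) : A) * (x - 1) := by rw [hx, mul_zero, add_zero, Nat.cast_succ]

theorem pow_eq_one_of_sq_sub_one_eq_zero {A : Type*} [Ring A] {p : ℕ} (hp : (p : A) = 0)
    {x : A} (hx : (x - 1) ^ 2 = 0) : x ^ p = 1 := by
  rw [pow_eq_one_add_mul_sub_one_of_sq_sub_one_eq_zero hx, hp, zero_mul, add_zero]

theorem MonoidHom.finiteIndex_ker_of_finite_range {G M : Type*} [Group G] [Monoid M]
    (f : G →* M) (h : (Set.range f).Finite) : f.ker.FiniteIndex := by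
  have : Finite f.toHomUnits.range := by
    refine (h.preimage Units.val_injective.injOn).subset ?_
    rintro _ ⟨g, rfl⟩
    exact ⟨g, rfl⟩
  rw [← MonoidHom.ker_toHomUnits]
  infer_instance

namespace Representation

variable {R G M : Type*} [CommRing R] [Group G] [AddCommGroup M] [Module R M]
  (ρ : Representation R G M) (U : Submodule R M) (hU : ∀ g, U ≤ U.comap (ρ g))

/-- The map `ρ_U` of the paper. -/
def subProdQuotient : G →* Module.End R U × Module.End R (M ⧸ U) :=
  MonoidHom.prod (ρ.subrepresentation U hU) (ρ.quotient U hU)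

variable {ρ U hU}

theorem sub_one_mul_sub_one_eq_zero_of_mem_ker {g h : G}
    (hg : g ∈ (ρ.subProdQuotient U hU).ker) (hh : h ∈ (ρ.subProdQuotient U hU).ker) :
    (ρ g - 1) * (ρ h - 1) = 0 := by
  rw [MonoidHom.mem_ker, subProdQuotient, MonoidHom.prod_apply, Prod.mk_eq_one] at hg hh
  have hgU : ∀ u ∈ U, ρ g u = u := fun u hu =>
    congrArg Subtype.val (LinearMap.congr_fun hg.1 ⟨u, hu⟩)
  have hhQ : ∀ v, ρ h v - v ∈ U := fun v =>
    (Submodule.Quotient.eq U).mp (LinearMap.congr_fun hh.2 (Submodule.Quotient.mk v))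
  ext v
  simpa [sub_eq_zero] using hgU _ (hhQ v)

theorem mul_comm_of_mem_ker (hρ : Function.Injective ρ) {g h : G}
    (hg : g ∈ (ρ.subProdQuotient U hU).ker) (hh : h ∈ (ρ.subProdQuotient U hU).ker) :
    g * h = h * g := by
  apply hρ
  have hgh := sub_one_mul_sub_one_eq_zero_of_mem_ker hg hh
  have hhg := sub_one_mul_sub_one_eq_zero_of_mem_ker hh hg
  calc ρ (g * h) = (ρ g - 1) * (ρ h - 1) + ρ g + ρ h - 1 := by rw [map_mul]; noncomm_ring
    _ = (ρ h - 1) * (ρ g - 1) + ρ h + ρ g - 1 := by rw [hgh, hhg, add_right_comm]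
    _ = ρ (h * g) := by rw [map_mul]; noncomm_ring

theorem pow_char_eq_one_of_mem_ker (hρ : Function.Injective ρ) (p : ℕ) [CharP R p] {g : G}
    (hg : g ∈ (ρ.subProdQuotient U hU).ker) : g ^ p = 1 := by
  apply hρ
  have hp : (p : Module.End R M) = 0 := by
    rw [← map_natCast (algebraMap R (Module.End R M)), CharP.cast_eq_zero, map_zero]
  rw [map_pow, map_one]
  exact pow_eq_one_of_sq_sub_one_eq_zero hp <| by
    rw [sq, sub_one_mul_sub_one_eq_zero_of_mem_ker hg hg]

theorem finite_ker_subProdQuotient (hρ : Function.Injective ρ) (p : ℕ) [CharP R p] [NeZero p]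
    [Group.FG (ρ.subProdQuotient U hU).ker] : Finite (ρ.subProdQuotient U hU).ker := by
  let _ : CommGroup (ρ.subProdQuotient U hU).ker :=
    { mul_comm := fun g h => Subtype.ext (mul_comm_of_mem_ker hρ g.2 h.2) }
  refine CommGroup.finite_of_fg_isMulTorsion _ fun g => ?_
  exact isOfFinOrder_iff_pow_eq_one.mpr
    ⟨p, NeZero.pos p, Subtype.ext (pow_char_eq_one_of_mem_ker hρ p g.2)⟩

theorem finite_iff_finite_range_subProdQuotient [Group.FG G] (hρ : Function.Injective ρ)
    (p : ℕ) [CharP R p] [NeZero p] :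
    Finite G ↔ (Set.range (ρ.subProdQuotient U hU)).Finite := by
  refine ⟨fun _ => Set.finite_range _, fun h => ?_⟩
  have := (ρ.subProdQuotient U hU).finiteIndex_ker_of_finite_range h
  have := finite_ker_subProdQuotient (hU := hU) hρ p
  exact Finite.of_subgroup_quotient (ρ.subProdQuotient U hU).ker

end Representation

theorem finite_iff_block_diagonal_image_finite_general
    {p : ℕ} [Fact p.Prime] {F : Type*} [Field F] [CharP F p] {n : ℕ}
    (G : Subgroup (GL (Fin n) F)) [Group.FG G]
    (U : Submodule F (Fin n → F))
    (hU : ∀ g : G, ∀ v ∈ U,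
      Matrix.mulVecLin (((g : GL (Fin n) F)) : Matrix (Fin n) (Fin n) F) v ∈ U) :
    Finite G ↔
      Set.Finite (Set.range fun g : G =>
        ((Matrix.mulVecLin (((g : GL (Fin n) F)) : Matrix (Fin n) (Fin n) F)).restrict (hU g),
         Submodule.mapQ U U
           (Matrix.mulVecLin (((g : GL (Fin n) F)) : Matrix (Fin n) (Fin n) F))
           (fun v hv => hU g v hv))) := by
  let ρ : Representation F G (Fin n → F) :=
    Matrix.toLinAlgEquiv'.toMonoidHom.comp ((Units.coeHom _).comp G.subtype)
  have hρ : Function.Injective ρ :=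
    Matrix.toLinAlgEquiv'.injective.comp (Units.val_injective.comp Subtype.val_injective)
  exact Representation.finite_iff_finite_range_subProdQuotient (U := U) (hU := hU) hρ p

/-- Let `F` be a field of characteristic `p > 0`, `G ≤ GL(n,F)`
finitely generated, and `U` a nonzero proper `G`-invariant subspace of `V = F^n`.  Let
`ρ_U` send `g ∈ G` to the pair of induced actions on `U` and on `V/U`.  Then `G` is
finite if and only if `ρ_U(G)` is finite. -/
theorem finite_iff_block_diagonal_image_finite
    {p : ℕ} [Fact p.Prime] {F : Type*} [Field F] [CharP F p] {n : ℕ}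
    (G : Subgroup (GL (Fin n) F)) [Group.FG G]
    (U : Submodule F (Fin n → F)) (hU0 : U ≠ ⊥) (hU1 : U ≠ ⊤)
    (hU : ∀ g : G, ∀ v ∈ U,
      Matrix.mulVecLin (((g : GL (Fin n) F)) : Matrix (Fin n) (Fin n) F) v ∈ U) :
    Finite G ↔
      Set.Finite (Set.range fun g : G =>
        ((Matrix.mulVecLin (((g : GL (Fin n) F)) : Matrix (Fin n) (Fin n) F)).restrict (hU g),
         Submodule.mapQ U U
           (Matrix.mulVecLin (((g : GL (Fin n) F)) : Matrix (Fin n) (Fin n) F))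
           (fun v hv => hU g v hv))) :=
  finite_iff_block_diagonal_image_finite_general (p := p) G U hU
end

section
/- Over F = F_2(X), the group G ≤ GL(2,F) generated by the matrices [[1,1],[0,1]] and [[1,X],[0,1]] satisfies: for every α in the algebraic closure of F_2, dim over F_2(α) of the enveloping algebra ⟨G⟩_{F_2(α)} equals 3, while dim over F_2(α) of ⟨G(α)⟩_{F_2(α)} equals 2; in particular the congruence map on enveloping algebras over F_2(α) is never an isomorphism even though G is finite. -/
open scoped MatrixGroups

section Aux

variable {K R : Type*} [Field K] [CommRing R] [Algebra K R]

/-- unitriangular matrix -/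
private def uu (b : R) : Matrix (Fin 2) (Fin 2) R := !![1, b; 0, 1]

private lemma uu_mul (b c : R) : uu b * uu c = uu (b + c) := by
  simp [uu, Matrix.mul_fin_two, add_comm]

private lemma uu_zero : uu (0 : R) = 1 := by
  simp [uu, Matrix.one_fin_two]

private lemma uu_self_mul (b : R) (h2 : b + b = 0) : uu b * uu b = 1 := by
  rw [uu_mul, h2, uu_zero]

private lemma uu_add (b c : R) : uu (b + c) = uu b + uu c - 1 := by
  ext i j
  fin_cases i <;> fin_cases j <;> simp [uu, Matrix.one_fin_two]

/-- the unit version -/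
private def uUnit (b : R) (h2 : b + b = 0) : GL (Fin 2) R :=
  ⟨uu b, uu b, uu_self_mul b h2, uu_self_mul b h2⟩

private lemma span_image_closure (x y : R) (h2 : ∀ b : R, b + b = 0) :
    Submodule.span K
      ((fun g : GL (Fin 2) R => (g : Matrix (Fin 2) (Fin 2) R)) ''
        (Subgroup.closure
          {g : GL (Fin 2) R |
            (g : Matrix (Fin 2) (Fin 2) R) = uu x ∨
            (g : Matrix (Fin 2) (Fin 2) R) = uu y} : Set (GL (Fin 2) R))) =
    Submodule.span K {1, uu x, uu y} := by
  have h1mem : (1 : Matrix (Fin 2) (Fin 2) R) ∈ Submodule.span K {1, uu x, uu y} :=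
    Submodule.subset_span (by simp)
  apply le_antisymm
  · rw [Submodule.span_le]
    rintro _ ⟨g, hg, rfl⟩
    have key : ∀ (g : GL (Fin 2) R), g ∈ Subgroup.closure
        {g : GL (Fin 2) R | (g : Matrix (Fin 2) (Fin 2) R) = uu x ∨
          (g : Matrix (Fin 2) (Fin 2) R) = uu y} →
        ∃ b : R, (g : Matrix (Fin 2) (Fin 2) R) = uu b ∧
          (g : Matrix (Fin 2) (Fin 2) R) ∈ Submodule.span K {1, uu x, uu y} := by
      intro g hg
      induction hg using Subgroup.closure_induction with
      | mem g hgs =>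
        rcases hgs with h | h
        · exact ⟨x, h, h ▸ Submodule.subset_span (by simp)⟩
        · exact ⟨y, h, h ▸ Submodule.subset_span (by simp)⟩
      | one => exact ⟨0, by simp [uu_zero], by simpa using h1mem⟩
      | mul a b ha hb iha ihb =>
        obtain ⟨s, hs, hsm⟩ := iha
        obtain ⟨t, ht, htm⟩ := ihb
        refine ⟨s + t, ?_, ?_⟩
        · simp [Units.val_mul, hs, ht, uu_mul]
        · rw [Units.val_mul, hs, ht, uu_mul, uu_add]
          exact Submodule.sub_mem _ (Submodule.add_mem _ (hs ▸ hsm) (ht ▸ htm)) h1mem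
      | inv a ha iha =>
        obtain ⟨s, hs, hsm⟩ := iha
        have : ((a⁻¹ : GL (Fin 2) R) : Matrix (Fin 2) (Fin 2) R) = uu s := by
          rw [Matrix.coe_units_inv, hs, Matrix.inv_eq_right_inv (uu_self_mul s (h2 s))]
        exact ⟨s, this, this ▸ (hs ▸ hsm)⟩
    exact (key g hg).choose_spec.2
  · rw [Submodule.span_le]
    rintro m (rfl | rfl | rfl)
    · exact Submodule.subset_span ⟨1, Subgroup.one_mem _, rfl⟩
    · exact Submodule.subset_span
        ⟨uUnit x (h2 x), Subgroup.subset_closure (Or.inl rfl), rfl⟩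
    · exact Submodule.subset_span
        ⟨uUnit y (h2 y), Subgroup.subset_closure (Or.inr rfl), rfl⟩

end Aux

/-- Over `F = F_2(X)`, let `G ≤ GL(2,F)` be generated by
`[[1,1],[0,1]]` and `[[1,X],[0,1]]`.  For every `α` in the algebraic closure of `F_2`
(equivalently, for every finite field `E = F_2(α)` of characteristic `2` generated by an
element `α`), the enveloping algebra `⟨G⟩_{E}` (the `E`-span of `G` inside
`Mat(2, E(X))`) has dimension `3` over `E`, while the enveloping algebra
`⟨G(α)⟩_{E}` of the congruence image `G(α) = ⟨[[1,1],[0,1]], [[1,α],[0,1]]⟩` has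
dimension `2` over `E`; in particular the congruence map on enveloping algebras over
`E = F_2(α)` is never an isomorphism, even though `G` is finite. -/
theorem enveloping_algebra_dims_of_unitriangular_example
    {E : Type*} [Field E] [Finite E] [Algebra (ZMod 2) E] (α : E)
    (hα : Algebra.adjoin (ZMod 2) {α} = ⊤) :
    Module.finrank E
        (Submodule.span E
          ((fun g : GL (Fin 2) (RatFunc E) => (g : Matrix (Fin 2) (Fin 2) (RatFunc E))) ''
            (Subgroup.closure
              {g : GL (Fin 2) (RatFunc E) |
                (g : Matrix (Fin 2) (Fin 2) (RatFunc E)) = !![1, 1; 0, 1] ∨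
                (g : Matrix (Fin 2) (Fin 2) (RatFunc E)) = !![1, RatFunc.X; 0, 1]} :
              Set (GL (Fin 2) (RatFunc E))))) = 3 ∧
    Module.finrank E
        (Submodule.span E
          ((fun g : GL (Fin 2) E => (g : Matrix (Fin 2) (Fin 2) E)) ''
            (Subgroup.closure
              {g : GL (Fin 2) E |
                (g : Matrix (Fin 2) (Fin 2) E) = !![1, 1; 0, 1] ∨
                (g : Matrix (Fin 2) (Fin 2) E) = !![1, α; 0, 1]} :
              Set (GL (Fin 2) E)))) = 2 := by
  -- characteristic 2 facts
  have h2E : ∀ b : E, b + b = 0 := by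
    intro b
    have : (2 : E) = 0 := by
      have h := map_ofNat (algebraMap (ZMod 2) E) 2
      rw [show (OfNat.ofNat 2 : ZMod 2) = 0 from by decide, map_zero] at h
      exact h.symm
    rw [← two_mul, this, zero_mul]
  have h2F : ∀ b : RatFunc E, b + b = 0 := by
    intro b
    have : (2 : RatFunc E) = 0 := by
      rw [show (2 : RatFunc E) = algebraMap E (RatFunc E) 2 by rw [map_ofNat],
        show (2 : E) = 0 from by have := h2E 1; linear_combination this, map_zero]
    rw [← two_mul, this, zero_mul]
  constructor
  · rw [show (!![1, 1; 0, 1] : Matrix (Fin 2) (Fin 2) (RatFunc E)) = uu 1 from rfl,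
      show (!![1, RatFunc.X; 0, 1] : Matrix (Fin 2) (Fin 2) (RatFunc E)) = uu RatFunc.X from rfl,
      span_image_closure 1 RatFunc.X h2F]
    have hrange : ({1, uu 1, uu RatFunc.X} : Set (Matrix (Fin 2) (Fin 2) (RatFunc E))) =
        Set.range ![1, uu 1, uu RatFunc.X] := by
      simp [Matrix.range_cons, Matrix.range_empty]
      ext z; simp; tauto
    rw [hrange, finrank_span_eq_card ?_]
    · simp
    -- linear independence of 1, uu 1, uu X over E
    rw [Fintype.linearIndependent_iff]
    intro g hsum
    have hentry : ∀ i j : Fin 2,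
        g 0 • (1 : Matrix (Fin 2) (Fin 2) (RatFunc E)) i j + g 1 • (uu 1 : Matrix (Fin 2) (Fin 2) (RatFunc E)) i j
          + g 2 • (uu RatFunc.X : Matrix (Fin 2) (Fin 2) (RatFunc E)) i j = 0 := by
      intro i j
      have := congrFun (congrFun hsum i) j
      simpa [Fin.sum_univ_three, Matrix.add_apply, Matrix.smul_apply] using this
    have h01 := hentry 0 1
    have h00 := hentry 0 0
    simp [uu, Matrix.one_fin_two, Algebra.smul_def] at h01 h00
    -- h01 : algebraMap (g 1) + algebraMap (g 2) * X = 0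
    have hpoly : Polynomial.C (g 1) + Polynomial.C (g 2) * Polynomial.X = 0 := by
      apply RatFunc.algebraMap_injective E
      rw [map_zero, map_add, map_mul, RatFunc.algebraMap_X, RatFunc.algebraMap_C,
        RatFunc.algebraMap_C]
      exact h01
    have hg1 : g 1 = 0 := by
      have := congrArg (fun p => Polynomial.coeff p 0) hpoly
      simpa using this
    have hg2 : g 2 = 0 := by
      have := congrArg (fun p => Polynomial.coeff p 1) hpoly
      simpa using this
    have hg0 : g 0 = 0 := by
      rw [hg1, hg2] at h00
      simp only [map_zero, add_zero] at h00
      exact RatFunc.C.injective (by rw [h00, map_zero])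
    intro i; fin_cases i <;> assumption
  · rw [show (!![1, 1; 0, 1] : Matrix (Fin 2) (Fin 2) E) = uu 1 from rfl,
      show (!![1, α; 0, 1] : Matrix (Fin 2) (Fin 2) E) = uu α from rfl,
      span_image_closure 1 α h2E]
    have hspan : Submodule.span E ({1, uu 1, uu α} : Set (Matrix (Fin 2) (Fin 2) E)) =
        Submodule.span E {1, uu 1} := by
      apply le_antisymm
      · rw [Submodule.span_le]
        rintro m (rfl | rfl | rfl)
        · exact Submodule.subset_span (by simp)
        · exact Submodule.subset_span (by simp)
        · have : (uu α : Matrix (Fin 2) (Fin 2) E) = (1 - α) • 1 + α • uu 1 := by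
            ext i j
            fin_cases i <;> fin_cases j <;>
              simp [uu, Matrix.one_fin_two, Matrix.smul_apply] <;> ring
          rw [this]
          exact Submodule.add_mem _
            (Submodule.smul_mem _ _ (Submodule.subset_span (by simp)))
            (Submodule.smul_mem _ _ (Submodule.subset_span (by simp)))
      · exact Submodule.span_mono (by intro z hz; simp at hz; rcases hz with rfl | rfl <;> simp)
    rw [hspan]
    have hrange : ({1, uu 1} : Set (Matrix (Fin 2) (Fin 2) E)) = Set.range ![1, uu 1] := by
      simp [Matrix.range_cons, Matrix.range_empty]
      ext z; simp; tauto
    rw [hrange, finrank_span_eq_card ?_]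
    · simp
    rw [Fintype.linearIndependent_iff]
    intro g hsum
    have hentry : ∀ i j : Fin 2,
        g 0 • (1 : Matrix (Fin 2) (Fin 2) E) i j + g 1 • (uu 1 : Matrix (Fin 2) (Fin 2) E) i j = 0 := by
      intro i j
      have := congrFun (congrFun hsum i) j
      simpa [Fin.sum_univ_two, Matrix.add_apply, Matrix.smul_apply] using this
    have h01 := hentry 0 1
    have h00 := hentry 0 0
    simp [uu, Matrix.one_fin_two, smul_eq_mul] at h01 h00
    intro i; fin_cases i <;> simp_all
end
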